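/- Let H be a complex Hilbert space, U a unitary operator on H, and let r be a real number with 0 ≤ r < π/2. Suppose that the spectrum of U is contained in the arc {exp(i·q) : q ∈ [−r, r]} ⊆ ℂ. Then there exists a unique bounded operator A on H such that A is self-adjoint, the spectrum of A is contained in the image of the real interval [−r, r] in ℂ, and exp(i • A) = U (operator exponential of the scalar multiple i • A). -/

import Mathlib

/-!
The logarithm is `A = cfc arg U`. Since `r < π` the arc avoids the branch cut of `arg`, so `arg` is
continuous on the spectrum of `U` and inverts `q ↦ exp (q i)` there; hence `exp (i • A) = U` and
the spectrum of `A` is `arg` of the arc, i.e. `[-r, r]`. Conversely, a self-adjoint `B` with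
spectrum in `[-r, r]` has norm `< π`, so `arg ∘ exp (i ·)` is the identity on its spectrum and
`cfc arg (exp (i • B)) = B`.
-/

open Complex Unitary selfAdjoint Set
open scoped Real

lemma Complex.arg_exp_ofReal_mul_I {q : ℝ} (hq : q ∈ Ioc (-π) π) :
    arg (exp (q * I)) = q := by
  rw [exp_mul_I, arg_cos_add_sin_mul_I hq]

lemma Complex.exp_ofReal_mul_I_mem_slitPlane {q : ℝ} (hq : q ∈ Ioo (-π) π) :
    exp (q * I) ∈ slitPlane :=
  mem_slitPlane_iff_arg.mpr
    ⟨by rw [arg_exp_ofReal_mul_I (Ioo_subset_Ioc_self hq)]; exact hq.2.ne, exp_ne_zero _⟩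

lemma Complex.arc_subset_slitPlane {r : ℝ} (hr : r < π) :
    {z : ℂ | ∃ q ∈ Icc (-r) r, z = exp (q * I)} ⊆ slitPlane := by
  rintro _ ⟨q, hq, rfl⟩
  exact exp_ofReal_mul_I_mem_slitPlane (Icc_subset_Ioo (neg_lt_neg hr) hr hq)

section CStarAlgebra

variable {A : Type*} [CStarAlgebra A]

lemma IsSelfAdjoint.norm_lt_of_forall_spectrum_norm_lt {b : A} (hb : IsSelfAdjoint b) {c : ℝ}
    (hc : 0 < c) (h : ∀ z ∈ spectrum ℂ b, ‖z‖ < c) : ‖b‖ < c := by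
  rw [← cfc_id' ℂ b]
  exact norm_cfc_lt hc h

lemma cfc_arg_exp_I_smul {b : A} (hb : IsSelfAdjoint b) (h : ‖b‖ < π) :
    cfc (arg · : ℂ → ℂ) (NormedSpace.exp (I • b)) = b :=
  congrArg Subtype.val (argSelfAdjoint_expUnitary (x := ⟨b, hb⟩) h)

lemma exp_I_smul_cfc_arg {u : A} (hu : u ∈ unitary A) (h : ‖u - 1‖ < 2) :
    NormedSpace.exp (I • cfc (arg · : ℂ → ℂ) u) = u :=
  congrArg Subtype.val (expUnitary_argSelfAdjoint (u := ⟨u, hu⟩) h)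

lemma spectrum_cfc_arg_subset {u : A} [IsStarNormal u] {r : ℝ} (hr : r < π)
    (h : spectrum ℂ u ⊆ {z : ℂ | ∃ q ∈ Icc (-r) r, z = exp (q * I)}) :
    spectrum ℂ (cfc (arg · : ℂ → ℂ) u) ⊆ (fun q : ℝ => (q : ℂ)) '' Icc (-r) r := by
  have hcont : ContinuousOn (arg · : ℂ → ℂ) (spectrum ℂ u) :=
    continuous_ofReal.comp_continuousOn <|
      continuousOn_arg.mono <| h.trans <| arc_subset_slitPlane hr
  rw [cfc_map_spectrum _ u]
  rintro _ ⟨z, hz, rfl⟩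
  obtain ⟨q, hq, rfl⟩ := h hz
  have hq' : q ∈ Ioc (-π) π := Icc_subset_Ioc (neg_lt_neg hr) hr.le hq
  exact ⟨q, hq, congrArg ofReal (arg_exp_ofReal_mul_I hq').symm⟩

end CStarAlgebra

theorem stmt4
    {H : Type*} [NormedAddCommGroup H] [InnerProductSpace ℂ H] [CompleteSpace H]
    (U : H →L[ℂ] H) (hU : U ∈ unitary (H →L[ℂ] H))
    (r : ℝ) (hr : r < Real.pi / 2)
    (hspec : spectrum ℂ U ⊆ {z : ℂ | ∃ q ∈ Set.Icc (-r) r, z = Complex.exp (q * Complex.I)}) :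
    ∃! A : H →L[ℂ] H, IsSelfAdjoint A ∧
      spectrum ℂ A ⊆ (fun q : ℝ => (q : ℂ)) '' Set.Icc (-r) r ∧
      NormedSpace.exp (Complex.I • A) = U := by
  have hrπ : r < π := by linarith [Real.pi_pos]
  have : IsStarNormal U := isStarNormal_of_mem_unitary hU
  have hU1 : ‖U - 1‖ < 2 :=
    (spectrum_subset_slitPlane_iff_norm_lt_two hU).mp (hspec.trans (arc_subset_slitPlane hrπ))
  refine ⟨cfc (arg · : ℂ → ℂ) U,
    ⟨.cfc_arg U, spectrum_cfc_arg_subset hrπ hspec, exp_I_smul_cfc_arg hU hU1⟩, ?_⟩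
  rintro B ⟨hB, hBspec, rfl⟩
  refine (cfc_arg_exp_I_smul hB (hB.norm_lt_of_forall_spectrum_norm_lt Real.pi_pos ?_)).symm
  rintro _ hz
  obtain ⟨q, hq, rfl⟩ := hBspec hz
  rw [norm_real, Real.norm_eq_abs, abs_lt]
  exact ⟨by linarith [hq.1], by linarith [hq.2]⟩
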